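/- For the set of finally defaulted institutions D_n, their total systemic importance S_n := Σ_{i∈D_n} s_i, and the vector χ_n of finally sold shares divided by n produced by the combined contagion process, it holds D̂_n ⊆ D_n ⊆ D̄_n, Ŝ_n ≤ S_n ≤ S̄_n, and χ̂_n ≤ χ_n ≤ χ̄_n componentwise. -/
import Mathlib


open MeasureTheory Filter Set Topology
open scoped ENNReal

/-- `∑_{j ∈ D} e_{j,i}`, the total exposure of institution `i` to the set `D`. -/
noncomputable def expoSum {n : ℕ} (e : Fin n → Fin n → ℝ) (D : Set (Fin n)) (i : Fin n) : ℝ :=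
  ∑ j, D.indicator (fun j' => e j' i) j

/-- The combined default-contagion/fire-sales iteration `(D_(k), σ_(k))`:
`D_(0) = ∅`, `σ_(0) = 0`, and for `k ≥ 1`,
`D_(k) = {i : ∑_{j∈D_(k-1)} e_{j,i} ≥ c_i − ℓ_i − x_i·h(σ_(k-1)/n)}` and
`σ_(k)^m = ∑_i x_i^m ρ((∑_{j∈D_(k-1)} e_{j,i} + ℓ_i + x_i·h(σ_(k-1)/n)) / c_i)`. -/
noncomputable def combIter {M : ℕ} (ρ : ℝ → ℝ) (h : (Fin M → ℝ) → Fin M → ℝ) (n : ℕ)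
    (x : Fin n → Fin M → ℝ) (c : Fin n → ℝ≥0∞) (ℓ : Fin n → ℝ) (e : Fin n → Fin n → ℝ) :
    ℕ → Set (Fin n) × (Fin M → ℝ)
  | 0 => (∅, 0)
  | k + 1 =>
      ({i | c i ≤ ENNReal.ofReal (expoSum e (combIter ρ h n x c ℓ e k).1 i + ℓ i +
          ∑ m, x i m * h (fun m' => (combIter ρ h n x c ℓ e k).2 m' / (n : ℝ)) m)},
        fun m => ∑ i, x i m *
          ρ ((expoSum e (combIter ρ h n x c ℓ e k).1 i + ℓ i +
              ∑ m', x i m' * h (fun m'' => (combIter ρ h n x c ℓ e k).2 m'' / (n : ℝ)) m') /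
            (c i).toReal))

/-- Auxiliary: the argument `expoSum e D i + ℓ i + x_i · h(χ)`. -/
noncomputable def argF {M n : ℕ} (h : (Fin M → ℝ) → Fin M → ℝ) (x : Fin n → Fin M → ℝ)
    (ℓ : Fin n → ℝ) (e : Fin n → Fin n → ℝ) (D : Set (Fin n)) (χ : Fin M → ℝ) (i : Fin n) : ℝ :=
  expoSum e D i + ℓ i + ∑ m, x i m * h χ m
/-- The final state `(D_n, S_n, χ_n)` of the combined contagion process is sandwiched between the
lower process `(D̂_n, Ŝ_n, χ̂_n)` (built from strict inequalities and the left-continuous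
modification `ρ̊`) and the smallest equilibrium solution `(D̄_n, S̄_n, χ̄_n)`. -/
theorem stmt_19 {M n : ℕ} (hn : 0 < n)
    (ρ : ℝ → ℝ) (hρ_mono : MonotoneOn ρ (Set.Ici 0))
    (hρ_rc : ∀ u ∈ Set.Ici (0:ℝ), ContinuousWithinAt ρ (Set.Ici u) u)
    (hρ_zero : ρ 0 = 0) (hρ_mem : ∀ u ∈ Set.Ici (0:ℝ), ρ u ∈ Set.Icc (0:ℝ) 1)
    (hρ_plateau : ∀ u : ℝ, 1 ≤ u → ρ u = ρ 1)
    (ρc : ℝ → ℝ)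
    (hρc : ∀ u : ℝ, 0 ≤ u → Tendsto (fun ε => ρ ((1 - ε) * u)) (𝓝[>] 0) (𝓝 (ρc u)))
    (h : (Fin M → ℝ) → Fin M → ℝ)
    (hh_cont : ∀ m, ContinuousOn (fun χ => h χ m) {χ : Fin M → ℝ | ∀ m', 0 ≤ χ m'})
    (hh_mono : ∀ m (χ χ' : Fin M → ℝ), (∀ m', 0 ≤ χ m') → (∀ m', χ m' ≤ χ' m') → h χ m ≤ h χ' m)
    (hh_mem : ∀ m (χ : Fin M → ℝ), (∀ m', 0 ≤ χ m') → h χ m ∈ Set.Icc (0:ℝ) 1)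
    (x : Fin n → Fin M → ℝ) (hx : ∀ i m, 0 ≤ x i m)
    (c : Fin n → ℝ≥0∞) (hc : ∀ i, 0 < c i)
    (ℓ : Fin n → ℝ) (hℓ : ∀ i, 0 ≤ ℓ i)
    (s : Fin n → ℝ) (hs : ∀ i, 0 ≤ s i)
    (e : Fin n → Fin n → ℝ) (he : ∀ i j, 0 ≤ e i j)
    (Dn : Set (Fin n)) (hDn : Dn = {i | ∃ k, i ∈ (combIter ρ h n x c ℓ e k).1})
    (χn : Fin M → ℝ)
    (hχn : ∀ m, Tendsto (fun k => (combIter ρ h n x c ℓ e k).2 m / (n : ℝ)) atTop (𝓝 (χn m)))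
    -- `(D̄_n, χ̄_n)`: the smallest solution of the pair of equilibrium equations.
    (Dbar : Set (Fin n)) (χbar : Fin M → ℝ) (hχbar_nonneg : ∀ m, 0 ≤ χbar m)
    (hDbar_eq : Dbar = {i | c i ≤ ENNReal.ofReal (expoSum e Dbar i + ℓ i + ∑ m, x i m * h χbar m)})
    (hχbar_eq : ∀ m, χbar m =
      (∑ i, x i m * ρ ((expoSum e Dbar i + ℓ i + ∑ m', x i m' * h χbar m') / (c i).toReal)) / (n : ℝ))
    (hbar_min : ∀ (D' : Set (Fin n)) (χ' : Fin M → ℝ), (∀ m, 0 ≤ χ' m) →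
      D' = {i | c i ≤ ENNReal.ofReal (expoSum e D' i + ℓ i + ∑ m, x i m * h χ' m)} →
      (∀ m, χ' m =
        (∑ i, x i m * ρ ((expoSum e D' i + ℓ i + ∑ m', x i m' * h χ' m') / (c i).toReal)) / (n : ℝ)) →
      Dbar ⊆ D' ∧ ∀ m, χbar m ≤ χ' m)
    -- `(D̂_k, χ̂_k)`: the lower iteration with strict default inequalities and `ρ̊`.
    (Dhat : ℕ → Set (Fin n)) (chihat : ℕ → Fin M → ℝ)
    (hDhat0 : Dhat 0 = ∅) (hchihat0 : chihat 0 = 0)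
    (hchihat_nonneg : ∀ k m, 0 ≤ chihat k m)
    (hDhat_eq : ∀ k, Dhat (k + 1) =
      {i | c i < ENNReal.ofReal (expoSum e (Dhat (k + 1)) i + ℓ i + ∑ m, x i m * h (chihat k) m)})
    (hDhat_min : ∀ k (D' : Set (Fin n)),
      D' = {i | c i < ENNReal.ofReal (expoSum e D' i + ℓ i + ∑ m, x i m * h (chihat k) m)} →
      Dhat (k + 1) ⊆ D')
    (hchihat_eq : ∀ k m, chihat (k + 1) m =
      (∑ i, x i m * ρc ((expoSum e (Dhat (k + 1)) i + ℓ i +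
        ∑ m', x i m' * h (chihat (k + 1)) m') / (c i).toReal)) / (n : ℝ))
    (hchihat_min : ∀ k (χ' : Fin M → ℝ), (∀ m, 0 ≤ χ' m) →
      (∀ m, χ' m = (∑ i, x i m * ρc ((expoSum e (Dhat (k + 1)) i + ℓ i +
        ∑ m', x i m' * h χ' m') / (c i).toReal)) / (n : ℝ)) →
      ∀ m, chihat (k + 1) m ≤ χ' m) :
    Dhat n ⊆ Dn ∧ Dn ⊆ Dbar ∧
    (∑ i, (Dhat n).indicator s i) ≤ (∑ i, Dn.indicator s i) ∧
    (∑ i, Dn.indicator s i) ≤ (∑ i, Dbar.indicator s i) ∧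
    (∀ m, chihat n m ≤ χn m) ∧ (∀ m, χn m ≤ χbar m) := by
  classical
  have hn' : (0:ℝ) < n := Nat.cast_pos.mpr hn
  have hnne : (n:ℝ) ≠ 0 := ne_of_gt hn'
  set F := combIter ρ h n x c ℓ e with hFdef
  set χk : ℕ → Fin M → ℝ := fun k m => (F k).2 m / n with hχkdef
  -- definitional equations of the iteration
  have hD1 : ∀ k, (F (k+1)).1
      = {i | c i ≤ ENNReal.ofReal (argF h x ℓ e (F k).1 (χk k) i)} := fun _ => rfl
  have hσ1 : ∀ k m, (F (k+1)).2 m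
      = ∑ i, x i m * ρ (argF h x ℓ e (F k).1 (χk k) i / (c i).toReal) := fun _ _ => rfl
  -- basic positivity / monotonicity helpers
  have ρnn : ∀ a : ℝ, 0 ≤ a → 0 ≤ ρ a := fun a ha => (hρ_mem a ha).1
  have ρmono' : ∀ a b : ℝ, 0 ≤ a → a ≤ b → ρ a ≤ ρ b :=
    fun a b ha hab => hρ_mono ha (ha.trans hab) hab
  have hdiv : ∀ a b d : ℝ, a ≤ b → 0 ≤ d → a / d ≤ b / d := by
    intro a b d hab hd
    rcases hd.eq_or_lt with h0 | h0
    · simp [← h0]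
    · exact (div_le_div_iff_of_pos_right h0).mpr hab
  have expo_nonneg : ∀ (D : Set (Fin n)) i, 0 ≤ expoSum e D i := by
    intro D i
    exact Finset.sum_nonneg fun j _ => Set.indicator_nonneg (fun j' _ => he j' i) j
  have expo_mono : ∀ (D D' : Set (Fin n)) i, D ⊆ D' → expoSum e D i ≤ expoSum e D' i := by
    intro D D' i hDD
    exact Finset.sum_le_sum fun j _ =>
      Set.indicator_le_indicator_of_subset hDD (fun j' => he j' i) j
  have hxh_nonneg : ∀ (χ : Fin M → ℝ), (∀ m, 0 ≤ χ m) → ∀ i, 0 ≤ ∑ m', x i m' * h χ m' :=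
    fun χ hχ i => Finset.sum_nonneg fun m' _ => mul_nonneg (hx i m') (hh_mem m' χ hχ).1
  have arg_nonneg : ∀ (D : Set (Fin n)) (χ : Fin M → ℝ) i, (∀ m, 0 ≤ χ m) →
      0 ≤ argF h x ℓ e D χ i := by
    intro D χ i hχ
    have := hxh_nonneg χ hχ i
    have := expo_nonneg D i
    have := hℓ i
    unfold argF; linarith
  have arg_mono : ∀ (D D' : Set (Fin n)) (χ χ' : Fin M → ℝ) i, D ⊆ D' → (∀ m, 0 ≤ χ m) →
      (∀ m, χ m ≤ χ' m) → argF h x ℓ e D χ i ≤ argF h x ℓ e D' χ' i := by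
    intro D D' χ χ' i hDD hχ hχχ'
    unfold argF
    have h1 := expo_mono D D' i hDD
    have h2 : (∑ m, x i m * h χ m) ≤ ∑ m, x i m * h χ' m :=
      Finset.sum_le_sum fun m _ => mul_le_mul_of_nonneg_left (hh_mono m χ χ' hχ hχχ') (hx i m)
    linarith
  have sum_ρ_mono : ∀ (m : Fin M) (D D' : Set (Fin n)) (χ χ' : Fin M → ℝ), D ⊆ D' →
      (∀ m', 0 ≤ χ m') → (∀ m', χ m' ≤ χ' m') →
      (∑ i, x i m * ρ (argF h x ℓ e D χ i / (c i).toReal))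
        ≤ ∑ i, x i m * ρ (argF h x ℓ e D' χ' i / (c i).toReal) := by
    intro m D D' χ χ' hDD hχ hχχ'
    refine Finset.sum_le_sum fun i _ => mul_le_mul_of_nonneg_left ?_ (hx i m)
    exact ρmono' _ _ (div_nonneg (arg_nonneg D χ i hχ) ENNReal.toReal_nonneg)
      (hdiv _ _ _ (arg_mono D D' χ χ' i hDD hχ hχχ') ENNReal.toReal_nonneg)
  -- nonnegativity of the iteration
  have σ_nonneg : ∀ k m, 0 ≤ (F k).2 m := by
    intro k
    induction k with
    | zero => intro m; show (0:ℝ) ≤ 0; exact le_rfl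
    | succ k ih =>
      intro m
      rw [hσ1]
      exact Finset.sum_nonneg fun i _ => mul_nonneg (hx i m)
        (ρnn _ (div_nonneg (arg_nonneg _ _ _ fun m' => div_nonneg (ih m') hn'.le)
          ENNReal.toReal_nonneg))
  have χk_nonneg : ∀ k m, 0 ≤ χk k m := fun k m => div_nonneg (σ_nonneg k m) hn'.le
  -- monotonicity of the iteration in k
  have step : ∀ k, ((F k).1 ⊆ (F (k+1)).1) ∧ ∀ m, (F k).2 m ≤ (F (k+1)).2 m := by
    intro k
    induction k with
    | zero =>
      constructor
      · intro i hi; exact absurd hi (Set.notMem_empty i)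
      · intro m; show (0:ℝ) ≤ _; exact σ_nonneg 1 m
    | succ k ih =>
      have hχle : ∀ m, χk k m ≤ χk (k+1) m := fun m => hdiv _ _ _ (ih.2 m) hn'.le
      constructor
      · intro i hi
        rw [hD1] at hi
        rw [hD1]
        exact le_trans hi (ENNReal.ofReal_le_ofReal
          (arg_mono _ _ _ _ i ih.1 (χk_nonneg k) hχle))
      · intro m
        rw [hσ1, hσ1]
        exact sum_ρ_mono m _ _ _ _ ih.1 (χk_nonneg k) hχle
  have monoD : ∀ {k l}, k ≤ l → (F k).1 ⊆ (F l).1 := by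
    intro k l hkl
    induction hkl with
    | refl => exact subset_rfl
    | step _ ih => exact ih.trans (step _).1
  have monoσ : ∀ {k l}, k ≤ l → ∀ m, (F k).2 m ≤ (F l).2 m := by
    intro k l hkl
    induction hkl with
    | refl => exact fun m => le_rfl
    | step _ ih => exact fun m => (ih m).trans ((step _).2 m)
  -- bounds relating the iteration to χn
  have hχk_le_χn : ∀ k m, χk k m ≤ χn m := by
    intro k m
    refine ge_of_tendsto (hχn m) ?_
    exact eventually_atTop.2 ⟨k, fun l hl => hdiv _ _ _ (monoσ hl m) hn'.le⟩
  have χn_nonneg : ∀ m, 0 ≤ χn m := fun m => (χk_nonneg 0 m).trans (hχk_le_χn 0 m)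
  have hσ_le_nχn : ∀ k m, (F k).2 m ≤ n * χn m := by
    intro k m
    have := hχk_le_χn k m
    rw [hχkdef] at this
    have h2 : (F k).2 m / n ≤ χn m := this
    calc (F k).2 m = ((F k).2 m / n) * n := by field_simp
      _ ≤ χn m * n := mul_le_mul_of_nonneg_right h2 hn'.le
      _ = n * χn m := mul_comm _ _
  -- upper bound: the iteration stays below (Dbar, χbar)
  have nχbar_eq : ∀ m, (∑ i, x i m * ρ (argF h x ℓ e Dbar χbar i / (c i).toReal))
      = n * χbar m := by
    intro m
    have h1 : χbar m * n
        = ∑ i, x i m * ρ (argF h x ℓ e Dbar χbar i / (c i).toReal) :=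
      (eq_div_iff hnne).mp (hχbar_eq m)
    rw [← h1, mul_comm]
  have upper : ∀ k, ((F k).1 ⊆ Dbar) ∧ ∀ m, (F k).2 m ≤ n * χbar m := by
    intro k
    induction k with
    | zero =>
      constructor
      · intro i hi; exact absurd hi (Set.notMem_empty i)
      · intro m; show (0:ℝ) ≤ _; exact mul_nonneg hn'.le (hχbar_nonneg m)
    | succ k ih =>
      have hχkb : ∀ m, χk k m ≤ χbar m := by
        intro m
        rw [hχkdef]
        show (F k).2 m / n ≤ χbar m
        rw [div_le_iff₀ hn']
        calc (F k).2 m ≤ n * χbar m := ih.2 m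
          _ = χbar m * n := mul_comm _ _
      constructor
      · intro i hi
        rw [hD1] at hi
        rw [hDbar_eq]
        exact le_trans hi (ENNReal.ofReal_le_ofReal
          (arg_mono _ _ _ _ i ih.1 (χk_nonneg k) hχkb))
      · intro m
        rw [hσ1]
        calc (∑ i, x i m * ρ (argF h x ℓ e (F k).1 (χk k) i / (c i).toReal))
            ≤ ∑ i, x i m * ρ (argF h x ℓ e Dbar χbar i / (c i).toReal) :=
              sum_ρ_mono m _ _ _ _ ih.1 (χk_nonneg k) hχkb
          _ = n * χbar m := nχbar_eq m
  have hDnbar : Dn ⊆ Dbar := by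
    rw [hDn]
    rintro i ⟨k, hk⟩
    exact (upper k).1 hk
  have hχnbar : ∀ m, χn m ≤ χbar m := by
    intro m
    refine le_of_tendsto (hχn m) (Eventually.of_forall fun k => ?_)
    show (F k).2 m / n ≤ χbar m
    rw [div_le_iff₀ hn']
    calc (F k).2 m ≤ n * χbar m := (upper k).2 m
      _ = χbar m * n := mul_comm _ _
  have hDn_sub : ∀ k, (F k).1 ⊆ Dn := by
    intro k i hk
    rw [hDn]
    exact ⟨k, hk⟩
  -- stabilization of the default sets
  have stab : ∃ K0, ∀ K, K0 ≤ K → (F K).1 = Dn := by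
    refine ⟨Finset.univ.sup (fun i : Fin n =>
      if hi : ∃ k, i ∈ (F k).1 then Nat.find hi else 0), fun K hK => Set.Subset.antisymm (hDn_sub K) ?_⟩
    intro i hi
    rw [hDn] at hi
    have hi' : ∃ k, i ∈ (F k).1 := hi
    have h1 : i ∈ (F (Nat.find hi')).1 := Nat.find_spec hi'
    have h2 : (if hi : ∃ k, i ∈ (F k).1 then Nat.find hi else 0) = Nat.find hi' := dif_pos hi'
    have h3 : Nat.find hi' ≤ K := by
      refine le_trans ?_ hK
      rw [← h2]
      exact Finset.le_sup (f := fun i : Fin n => if hi : ∃ k, i ∈ (F k).1 then Nat.find hi else 0)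
        (Finset.mem_univ i)
    exact monoD h3 h1
  -- limits of h along the iteration
  have hχtend : Tendsto (fun K => χk K) atTop (𝓝 χn) := by
    rw [tendsto_pi_nhds]
    exact fun m => hχn m
  have hhlim : ∀ m', Tendsto (fun K => h (χk K) m') atTop (𝓝 (h χn m')) := by
    intro m'
    have hmem : χn ∈ {χ : Fin M → ℝ | ∀ m', 0 ≤ χ m'} := fun m'' => χn_nonneg m''
    have hcw := (hh_cont m' χn hmem).tendsto
    exact hcw.comp (tendsto_nhdsWithin_of_tendsto_nhds_of_eventually_within _ hχtend
      (Eventually.of_forall fun K m'' => χk_nonneg K m''))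
  have arglim : ∀ i, Tendsto (fun K => argF h x ℓ e (F K).1 (χk K) i) atTop
      (𝓝 (argF h x ℓ e Dn χn i)) := by
    intro i
    obtain ⟨K0, hK0⟩ := stab
    have h1 : Tendsto (fun K => expoSum e Dn i + ℓ i + ∑ m', x i m' * h (χk K) m') atTop
        (𝓝 (argF h x ℓ e Dn χn i)) :=
      tendsto_const_nhds.add (tendsto_finset_sum _ fun m' _ => tendsto_const_nhds.mul (hhlim m'))
    refine h1.congr' ?_
    filter_upwards [eventually_ge_atTop K0] with K hK
    unfold argF
    rw [hK0 K hK]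
  -- properties of the left-continuous modification ρc
  have hIoo : Set.Ioo (0:ℝ) 1 ∈ 𝓝[>] (0:ℝ) :=
    Ioo_mem_nhdsGT_of_mem (Set.left_mem_Ico.mpr one_pos)
  have ρc_nonneg : ∀ u : ℝ, 0 ≤ u → 0 ≤ ρc u := by
    intro u hu
    refine ge_of_tendsto (hρc u hu) ?_
    filter_upwards [hIoo] with ε hε
    exact ρnn _ (mul_nonneg (by linarith [hε.2]) hu)
  have ρc_mono : ∀ u v : ℝ, 0 ≤ u → u ≤ v → ρc u ≤ ρc v := by
    intro u v hu huv
    refine le_of_tendsto_of_tendsto (hρc u hu) (hρc v (hu.trans huv)) ?_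
    filter_upwards [hIoo] with ε hε
    exact ρmono' _ _ (mul_nonneg (by linarith [hε.2]) hu)
      (mul_le_mul_of_nonneg_left huv (by linarith [hε.2]))
  -- key inequality: the limit dominates the ρc-value at the limit configuration
  have key : ∀ m, (∑ i, x i m * ρc (argF h x ℓ e Dn χn i / (c i).toReal)) ≤ n * χn m := by
    intro m
    have hw_nonneg : ∀ i, 0 ≤ argF h x ℓ e Dn χn i / (c i).toReal :=
      fun i => div_nonneg (arg_nonneg _ _ _ χn_nonneg) ENNReal.toReal_nonneg
    have hεbound : ∀ ε ∈ Set.Ioo (0:ℝ) 1,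
        (∑ i, x i m * ρ ((1-ε) * (argF h x ℓ e Dn χn i / (c i).toReal))) ≤ n * χn m := by
      intro ε hε
      have hev : ∀ᶠ K in atTop, ∀ i, (1-ε) * (argF h x ℓ e Dn χn i / (c i).toReal)
          ≤ argF h x ℓ e (F K).1 (χk K) i / (c i).toReal := by
        rw [eventually_all]
        intro i
        rcases (hw_nonneg i).eq_or_lt with h0 | h0
        · refine Eventually.of_forall fun K => ?_
          rw [← h0, mul_zero]
          exact div_nonneg (arg_nonneg _ _ _ (χk_nonneg K)) ENNReal.toReal_nonneg
        · have hlt : (1-ε) * (argF h x ℓ e Dn χn i / (c i).toReal)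
              < argF h x ℓ e Dn χn i / (c i).toReal := by nlinarith [hε.1, hε.2]
          have h2 := (arglim i).div_const ((c i).toReal)
          exact (h2.eventually (eventually_gt_nhds hlt)).mono fun K hK => hK.le
      obtain ⟨K, hK⟩ := hev.exists
      calc (∑ i, x i m * ρ ((1-ε) * (argF h x ℓ e Dn χn i / (c i).toReal)))
          ≤ ∑ i, x i m * ρ (argF h x ℓ e (F K).1 (χk K) i / (c i).toReal) := by
            refine Finset.sum_le_sum fun i _ => mul_le_mul_of_nonneg_left ?_ (hx i m)
            exact ρmono' _ _ (mul_nonneg (by linarith [hε.2]) (hw_nonneg i)) (hK i)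
        _ = (F (K+1)).2 m := (hσ1 K m).symm
        _ ≤ n * χn m := hσ_le_nχn (K+1) m
    have htend : Tendsto (fun ε => ∑ i, x i m * ρ ((1-ε) * (argF h x ℓ e Dn χn i / (c i).toReal)))
        (𝓝[>] (0:ℝ)) (𝓝 (∑ i, x i m * ρc (argF h x ℓ e Dn χn i / (c i).toReal))) :=
      tendsto_finset_sum _ fun i _ => tendsto_const_nhds.mul (hρc _ (hw_nonneg i))
    refine le_of_tendsto htend ?_
    filter_upwards [hIoo] with ε hε using hεbound ε hε
  -- Dn absorbs strict defaults at the limit configuration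
  have pre : ∀ i, c i < ENNReal.ofReal (argF h x ℓ e Dn χn i) → i ∈ Dn := by
    intro i hlt
    have hne : c i ≠ ⊤ := (hlt.trans_le le_top).ne
    have h2 : (c i).toReal < argF h x ℓ e Dn χn i :=
      (ENNReal.lt_ofReal_iff_toReal_lt hne).mp hlt
    obtain ⟨K, hK⟩ := ((arglim i).eventually (eventually_gt_nhds h2)).exists
    have h3 : i ∈ (F (K+1)).1 := by
      rw [hD1]
      show c i ≤ ENNReal.ofReal _
      calc c i = ENNReal.ofReal (c i).toReal := (ENNReal.ofReal_toReal hne).symm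
        _ ≤ _ := ENNReal.ofReal_le_ofReal hK.le
    exact hDn_sub (K+1) h3
  -- main induction: the lower process stays below (Dn, χn)
  have main : ∀ k, Dhat k ⊆ Dn ∧ ∀ m, chihat k m ≤ χn m := by
    intro k
    induction k with
    | zero =>
      constructor
      · rw [hDhat0]; exact Set.empty_subset _
      · intro m; rw [hchihat0]; exact χn_nonneg m
    | succ k ih =>
      have hsub : Dhat (k+1) ⊆ Dn := by
        have Φmono : Monotone (fun D : Set (Fin n) =>
            {i | c i < ENNReal.ofReal (argF h x ℓ e D (chihat k) i)}) := by
          intro D D' hDD i hi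
          exact lt_of_lt_of_le hi (ENNReal.ofReal_le_ofReal
            (arg_mono D D' (chihat k) (chihat k) i hDD (hchihat_nonneg k) fun m => le_rfl))
        set Φ : Set (Fin n) →o Set (Fin n) :=
          ⟨fun D => {i | c i < ENNReal.ofReal (argF h x ℓ e D (chihat k) i)}, Φmono⟩ with hΦ
        have hfix : OrderHom.lfp Φ
            = {i | c i < ENNReal.ofReal (argF h x ℓ e (OrderHom.lfp Φ) (chihat k) i)} :=
          (OrderHom.map_lfp Φ).symm
        have h1 : Dhat (k+1) ⊆ OrderHom.lfp Φ := hDhat_min k _ hfix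
        have h2 : OrderHom.lfp Φ ⊆ Dn := by
          refine OrderHom.lfp_le Φ ?_
          intro i hi
          have hi' : c i < ENNReal.ofReal (argF h x ℓ e Dn (chihat k) i) := hi
          exact pre i (lt_of_lt_of_le hi' (ENNReal.ofReal_le_ofReal
            (arg_mono Dn Dn (chihat k) χn i subset_rfl (hchihat_nonneg k) ih.2)))
        exact h1.trans h2
      have hle : ∀ m, chihat (k+1) m ≤ χn m := by
        set Ψ : (Fin M → ℝ) → (Fin M → ℝ) := fun χ m =>
          (∑ i, x i m * ρc (argF h x ℓ e (Dhat (k+1)) χ i / (c i).toReal)) / n with hΨ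
        have Ψ_mono : ∀ χ χ' : Fin M → ℝ, (∀ m, 0 ≤ χ m) → (∀ m, χ m ≤ χ' m) →
            ∀ m, Ψ χ m ≤ Ψ χ' m := by
          intro χ χ' hχ hχχ' m
          refine hdiv _ _ _ (Finset.sum_le_sum fun i _ =>
            mul_le_mul_of_nonneg_left ?_ (hx i m)) hn'.le
          exact ρc_mono _ _ (div_nonneg (arg_nonneg _ _ _ hχ) ENNReal.toReal_nonneg)
            (hdiv _ _ _ (arg_mono _ _ _ _ i subset_rfl hχ hχχ') ENNReal.toReal_nonneg)
        have Ψ_nonneg : ∀ χ : Fin M → ℝ, (∀ m, 0 ≤ χ m) → ∀ m, 0 ≤ Ψ χ m := by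
          intro χ hχ m
          refine div_nonneg (Finset.sum_nonneg fun i _ => mul_nonneg (hx i m) ?_) hn'.le
          exact ρc_nonneg _ (div_nonneg (arg_nonneg _ _ _ hχ) ENNReal.toReal_nonneg)
        have hΨχn : ∀ m, Ψ χn m ≤ χn m := by
          intro m
          have h1 : (∑ i, x i m * ρc (argF h x ℓ e (Dhat (k+1)) χn i / (c i).toReal))
              ≤ ∑ i, x i m * ρc (argF h x ℓ e Dn χn i / (c i).toReal) := by
            refine Finset.sum_le_sum fun i _ => mul_le_mul_of_nonneg_left ?_ (hx i m)
            exact ρc_mono _ _ (div_nonneg (arg_nonneg _ _ _ χn_nonneg) ENNReal.toReal_nonneg)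
              (hdiv _ _ _ (arg_mono _ _ _ _ i hsub χn_nonneg fun _ => le_rfl)
                ENNReal.toReal_nonneg)
          have h2 := h1.trans (key m)
          show (∑ i, x i m * ρc (argF h x ℓ e (Dhat (k+1)) χn i / (c i).toReal)) / n ≤ χn m
          rw [div_le_iff₀ hn']
          calc (∑ i, x i m * ρc (argF h x ℓ e (Dhat (k+1)) χn i / (c i).toReal))
              ≤ n * χn m := h2
            _ = χn m * n := mul_comm _ _
        set S : Set (Fin M → ℝ) :=
          {χ | (∀ m, 0 ≤ χ m) ∧ (∀ m, χ m ≤ χn m) ∧ ∀ m, Ψ χ m ≤ χ m} with hS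
        have hχnS : χn ∈ S := ⟨χn_nonneg, fun m => le_rfl, hΨχn⟩
        set χs : Fin M → ℝ := fun m => sInf ((fun χ => χ m) '' S) with hχsdef
        have hbdd : ∀ m, BddBelow ((fun χ : Fin M → ℝ => χ m) '' S) := by
          intro m
          refine ⟨0, ?_⟩
          rintro y ⟨χ, hχ, rfl⟩
          exact hχ.1 m
        have hnem : ∀ m, ((fun χ : Fin M → ℝ => χ m) '' S).Nonempty :=
          fun m => ⟨χn m, χn, hχnS, rfl⟩
        have hlb : ∀ χ ∈ S, ∀ m, χs m ≤ χ m := fun χ hχ m => csInf_le (hbdd m) ⟨χ, hχ, rfl⟩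
        have hχs_nonneg : ∀ m, 0 ≤ χs m := by
          intro m
          refine le_csInf (hnem m) ?_
          rintro y ⟨χ, hχ, rfl⟩
          exact hχ.1 m
        have hΨχs_le : ∀ m, Ψ χs m ≤ χs m := by
          intro m
          refine le_csInf (hnem m) ?_
          rintro y ⟨χ, hχ, rfl⟩
          exact (Ψ_mono χs χ hχs_nonneg (hlb χ hχ) m).trans (hχ.2.2 m)
        have hχsS : χs ∈ S := ⟨hχs_nonneg, hlb χn hχnS, hΨχs_le⟩
        have hΨχsS : Ψ χs ∈ S :=
          ⟨Ψ_nonneg χs hχs_nonneg,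
           fun m => (Ψ_mono χs χn hχs_nonneg (hlb χn hχnS) m).trans (hΨχn m),
           Ψ_mono (Ψ χs) χs (Ψ_nonneg χs hχs_nonneg) hΨχs_le⟩
        have heq : ∀ m, χs m = Ψ χs m :=
          fun m => le_antisymm (hlb _ hΨχsS m) (hΨχs_le m)
        have hmin := hchihat_min k χs hχs_nonneg heq
        exact fun m => (hmin m).trans (hlb χn hχnS m)
      exact ⟨hsub, hle⟩
  refine ⟨(main n).1, hDnbar, ?_, ?_, (main n).2, hχnbar⟩
  · exact Finset.sum_le_sum fun i _ =>
      Set.indicator_le_indicator_of_subset (main n).1 (fun a => hs a) i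
  · exact Finset.sum_le_sum fun i _ =>
      Set.indicator_le_indicator_of_subset hDnbar (fun a => hs a) i
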